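/- arXiv:1602.00542 — 3 statements merged into one kernel-verified Lean document; each statement's English description precedes it below -/
import Mathlib

section
/- Let θ ∈ ℝⁿ with mean θ̄ = (1/n)∑θᵢ, and let Q be the standard Gaussian tail function with Q^c = 1 − Q. Define c₁ = (∑ᵢ θᵢ Q((θ̄−θᵢ)/σ)) / (∑ᵢ Q((θ̄−θᵢ)/σ)) and c₂ = (∑ᵢ θᵢ Q^c((θ̄−θᵢ)/σ)) / (∑ᵢ Q^c((θ̄−θᵢ)/σ)). Then c₁ − c₂ ≥ 0. -/
open MeasureTheory Real Set

noncomputable def gaussQ (x : ℝ) : ℝ :=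
  ∫ t in Set.Ioi x, (1 / Real.sqrt (2 * Real.pi)) * Real.exp (-(t ^ 2) / 2)

lemma pdf_eq (t : ℝ) : (1 / Real.sqrt (2 * Real.pi)) * Real.exp (-(t ^ 2) / 2)
    = (1 / Real.sqrt (2 * Real.pi)) * Real.exp (-(2⁻¹ : ℝ) * t ^ 2) := by ring_nf

lemma pdf_integrable : Integrable (fun t : ℝ => (1 / Real.sqrt (2 * Real.pi)) * Real.exp (-(t ^ 2) / 2)) := by
  simp_rw [pdf_eq]
  exact (integrable_exp_neg_mul_sq (by norm_num : (0:ℝ) < 2⁻¹)).const_mul _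

lemma pdf_pos (t : ℝ) : 0 < (1 / Real.sqrt (2 * Real.pi)) * Real.exp (-(t ^ 2) / 2) := by
  have : 0 < Real.sqrt (2 * Real.pi) := Real.sqrt_pos.2 (by positivity)
  positivity

lemma pdf_support : Function.support (fun t : ℝ => (1 / Real.sqrt (2 * Real.pi)) * Real.exp (-(t ^ 2) / 2)) = Set.univ := by
  ext t; simpa using (pdf_pos t).ne'

lemma gaussQ_pos (x : ℝ) : 0 < gaussQ x := by
  rw [gaussQ, setIntegral_pos_iff_support_of_nonneg_ae]
  · rw [pdf_support, Set.univ_inter]; simp [Real.volume_Ioi]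
  · exact Filter.Eventually.of_forall fun t => (pdf_pos t).le
  · exact pdf_integrable.integrableOn

lemma total : (∫ t : ℝ, (1 / Real.sqrt (2 * Real.pi)) * Real.exp (-(t ^ 2) / 2)) = 1 := by
  simp_rw [pdf_eq, integral_const_mul, integral_gaussian]
  have h2 : Real.pi / (2:ℝ)⁻¹ = 2 * Real.pi := by ring
  rw [h2, one_div_mul_eq_div, div_self]
  exact (Real.sqrt_pos.2 (by positivity)).ne'

lemma gaussQ_lt_one (x : ℝ) : gaussQ x < 1 := by
  have hIic : 0 < ∫ t in Set.Iic x, (1 / Real.sqrt (2 * Real.pi)) * Real.exp (-(t ^ 2) / 2) := by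
    rw [setIntegral_pos_iff_support_of_nonneg_ae]
    · rw [pdf_support, Set.univ_inter]; simp [Real.volume_Iic]
    · exact Filter.Eventually.of_forall fun t => (pdf_pos t).le
    · exact pdf_integrable.integrableOn
  have hsum := intervalIntegral.integral_Iic_add_Ioi (b := x) (μ := volume)
    pdf_integrable.integrableOn pdf_integrable.integrableOn
  rw [total] at hsum
  rw [gaussQ]; linarith

lemma gaussQ_antitone : Antitone gaussQ := by
  intro x y hxy
  apply setIntegral_mono_set pdf_integrable.integrableOn
    (Filter.Eventually.of_forall fun t => (pdf_pos t).le)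
  exact HasSubset.Subset.eventuallyLE (Set.Ioi_subset_Ioi hxy)

theorem stmt_4 (n : ℕ) (hn : 1 ≤ n) (σ : ℝ) (hσ : 0 < σ) (θ : Fin n → ℝ)
    (θbar : ℝ) (hbar : θbar = (∑ i, θ i) / n) :
    (∑ i, θ i * gaussQ ((θbar - θ i) / σ)) / (∑ i, gaussQ ((θbar - θ i) / σ)) -
      (∑ i, θ i * (1 - gaussQ ((θbar - θ i) / σ))) /
        (∑ i, (1 - gaussQ ((θbar - θ i) / σ))) ≥ 0 := by
  have hne : (Finset.univ : Finset (Fin n)).Nonempty := by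
    simpa [Finset.univ_nonempty_iff] using Fin.pos_iff_nonempty.1 hn
  set g : Fin n → ℝ := fun i => gaussQ ((θbar - θ i) / σ) with hg
  have hB : 0 < ∑ i, g i := Finset.sum_pos (fun i _ => gaussQ_pos _) hne
  have hD : 0 < ∑ i, (1 - g i) :=
    Finset.sum_pos (fun i _ => by
      have := gaussQ_lt_one ((θbar - θ i) / σ); simp only [hg]; linarith) hne
  have hmono : Monovary θ g := by
    intro i j hij
    by_contra h
    push_neg at h
    have h2 : (θbar - θ i) / σ ≤ (θbar - θ j) / σ := by
      gcongr
      all_goals linarith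
    exact absurd hij (not_lt.2 (gaussQ_antitone h2))
  have cheb := hmono.sum_mul_sum_le_card_mul_sum
  simp only [Fintype.card_fin] at cheb
  have hC : (∑ i, θ i * (1 - g i)) = (∑ i, θ i) - ∑ i, θ i * g i := by
    rw [← Finset.sum_sub_distrib]; congr 1; ext i; ring
  have hDn : (∑ i, (1 - g i)) = (n : ℝ) - ∑ i, g i := by
    rw [Finset.sum_sub_distrib]; simp
  rw [ge_iff_le, sub_nonneg, div_le_div_iff₀ hD hB, hC, hDn]
  nlinarith [cheb]
end

section
/- For x ≥ 0 and b > 0, the function h(x) = e^{b²/2}[Q(−x−b) − Q(x−b)] + Q(x) − Q(−x) is nonnegative; equivalently, f(−x;b) ≥ f(x;b) where f(x;b) = exp(−(b/√(2π))e^{−x²/2})[e^{b²/2}Q(x−b) + 1 − Q(x)]. -/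
open MeasureTheory Real intervalIntegral in
lemma gaussQ_aux : ∀ a c : ℝ, a ≤ c →
    gaussQ a - gaussQ c = ∫ t in a..c, (1 / Real.sqrt (2 * Real.pi)) * Real.exp (-(t ^ 2) / 2) := by
  intro a c hac
  have hi : Integrable (fun t : ℝ => (1 / Real.sqrt (2 * Real.pi)) * Real.exp (-(t ^ 2) / 2)) := by
    have h1 : Integrable (fun t : ℝ => Real.exp (-(1/2 : ℝ) * t ^ 2)) :=
      integrable_exp_neg_mul_sq (by norm_num)
    have := h1.const_mul (1 / Real.sqrt (2 * Real.pi))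
    convert this using 2 with t
    ring_nf
  have hsplit : gaussQ a = (∫ t in Set.Ioc a c, (1 / Real.sqrt (2 * Real.pi)) * Real.exp (-(t ^ 2) / 2))
      + gaussQ c := by
    rw [gaussQ, gaussQ, ← Set.Ioc_union_Ioi_eq_Ioi hac,
      setIntegral_union (Set.Ioc_disjoint_Ioi le_rfl) measurableSet_Ioi
        hi.integrableOn hi.integrableOn]
  rw [hsplit, intervalIntegral.integral_of_le hac]
  simp

theorem stmt_6 (b : ℝ) (hb : 0 < b) (x : ℝ) (hx : 0 ≤ x) :
    0 ≤ Real.exp (b ^ 2 / 2) * (gaussQ (-x - b) - gaussQ (x - b)) + gaussQ x - gaussQ (-x) ∧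
    Real.exp (-(b / Real.sqrt (2 * Real.pi)) * Real.exp (-((-x) ^ 2) / 2)) *
        (Real.exp (b ^ 2 / 2) * gaussQ (-x - b) + 1 - gaussQ (-x)) ≥
      Real.exp (-(b / Real.sqrt (2 * Real.pi)) * Real.exp (-(x ^ 2) / 2)) *
        (Real.exp (b ^ 2 / 2) * gaussQ (x - b) + 1 - gaussQ x) := by
  set φ : ℝ → ℝ := fun t => (1 / Real.sqrt (2 * Real.pi)) * Real.exp (-(t ^ 2) / 2) with hφ
  have hφc : Continuous φ := by
    exact continuous_const.mul ((continuous_pow 2).neg.div_const 2).rexp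
  have hcont : ∀ c : ℝ, Continuous (fun t : ℝ => φ t * Real.exp (t * c)) := fun c =>
    hφc.mul (continuous_id.mul continuous_const).rexp
  have hcont' : ∀ c : ℝ, Continuous (fun t : ℝ => φ t * Real.exp (-(t * c))) := fun c =>
    hφc.mul (continuous_id.mul continuous_const).neg.rexp
  have h1 : gaussQ (-x - b) - gaussQ (x - b) = ∫ t in (-x - b)..(x - b), φ t :=
    gaussQ_aux _ _ (by linarith)
  have h2 : gaussQ (-x) - gaussQ x = ∫ t in (-x)..x, φ t :=
    gaussQ_aux _ _ (by linarith)
  have refl : ∀ c : ℝ, (∫ t in (-x)..(0:ℝ), φ t * Real.exp (t * c))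
      = ∫ t in (0:ℝ)..x, φ t * Real.exp (-(t * c)) := by
    intro c
    rw [show (∫ t in (0:ℝ)..x, φ t * Real.exp (-(t * c)))
        = ∫ t in (0:ℝ)..x, φ (-t) * Real.exp ((-t) * c) by
      congr 1 with t
      simp only [hφ, neg_mul]
      ring_nf]
    rw [intervalIntegral.integral_comp_neg (fun t => φ t * Real.exp (t * c))]
    norm_num
  have split : ∀ c : ℝ, (∫ t in (-x)..x, φ t * Real.exp (t * c))
      = (∫ t in (0:ℝ)..x, φ t * Real.exp (-(t * c))) + ∫ t in (0:ℝ)..x, φ t * Real.exp (t * c) := by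
    intro c
    rw [← refl c, intervalIntegral.integral_add_adjacent_intervals
      ((hcont c).intervalIntegrable _ _) ((hcont c).intervalIntegrable _ _)]
  have e1 : Real.exp (b ^ 2 / 2) * (gaussQ (-x - b) - gaussQ (x - b))
      = (∫ t in (0:ℝ)..x, φ t * Real.exp (-(t * b))) + ∫ t in (0:ℝ)..x, φ t * Real.exp (t * b) := by
    rw [h1, show (∫ t in (-x - b)..(x - b), φ t) = ∫ t in (-x)..x, φ (t - b) from
      (intervalIntegral.integral_comp_sub_right (fun t => φ t) b).symm,
      ← intervalIntegral.integral_const_mul]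
    rw [show (∫ t in (-x)..x, Real.exp (b ^ 2 / 2) * φ (t - b))
        = ∫ t in (-x)..x, φ t * Real.exp (t * b) by
      congr 1 with t
      simp only [hφ]
      rw [mul_left_comm, ← Real.exp_add, mul_assoc, ← Real.exp_add]
      congr 2
      ring]
    exact split b
  have e2 : gaussQ (-x) - gaussQ x
      = (∫ t in (0:ℝ)..x, φ t * Real.exp (-(t * 0))) + ∫ t in (0:ℝ)..x, φ t * Real.exp (t * 0) := by
    rw [h2, ← split 0]
    simp
  have e3 : (0:ℝ) ≤ ((∫ t in (0:ℝ)..x, φ t * Real.exp (-(t * b))) + ∫ t in (0:ℝ)..x, φ t * Real.exp (t * b))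
      - ((∫ t in (0:ℝ)..x, φ t * Real.exp (-(t * 0))) + ∫ t in (0:ℝ)..x, φ t * Real.exp (t * 0)) := by
    have hcomb : ((∫ t in (0:ℝ)..x, φ t * Real.exp (-(t * b))) + ∫ t in (0:ℝ)..x, φ t * Real.exp (t * b))
        - ((∫ t in (0:ℝ)..x, φ t * Real.exp (-(t * 0))) + ∫ t in (0:ℝ)..x, φ t * Real.exp (t * 0))
        = ∫ t in (0:ℝ)..x, (φ t * Real.exp (-(t * b)) + φ t * Real.exp (t * b)
            - (φ t * Real.exp (-(t * 0)) + φ t * Real.exp (t * 0))) := by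
      rw [intervalIntegral.integral_sub, intervalIntegral.integral_add, intervalIntegral.integral_add]
      · exact (hcont' 0).intervalIntegrable _ _
      · exact (hcont 0).intervalIntegrable _ _
      · exact (hcont' b).intervalIntegrable _ _
      · exact (hcont b).intervalIntegrable _ _
      · exact ((hcont' b).add (hcont b)).intervalIntegrable _ _
      · exact ((hcont' 0).add (hcont 0)).intervalIntegrable _ _
    rw [hcomb]
    apply intervalIntegral.integral_nonneg hx
    intro t _
    have hφ0 : 0 ≤ φ t := by
      apply mul_nonneg _ (Real.exp_pos _).le
      positivity
    have hprod : Real.exp (t * b) * Real.exp (-(t * b)) = 1 := by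
      rw [← Real.exp_add]; simp
    simp only [mul_zero, neg_zero, Real.exp_zero, mul_one]
    nlinarith [mul_nonneg hφ0 (mul_nonneg (sq_nonneg (Real.exp (t * b) - 1))
      (Real.exp_pos (-(t * b))).le), hprod, hφ0, Real.exp_pos (t*b), Real.exp_pos (-(t*b))]
  have part1 : 0 ≤ Real.exp (b ^ 2 / 2) * (gaussQ (-x - b) - gaussQ (x - b)) + gaussQ x - gaussQ (-x) := by
    linarith [e3, e1.symm, e2.symm]
  refine ⟨part1, ?_⟩
  have hsq : ((-x) ^ 2 : ℝ) = x ^ 2 := by ring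
  rw [hsq, ge_iff_le]
  have hA : 0 < Real.exp (-(b / Real.sqrt (2 * Real.pi)) * Real.exp (-(x ^ 2) / 2)) :=
    Real.exp_pos _
  nlinarith [part1, hA]
end

section
/- Let w₁,…,wₙ be i.i.d. N(0,σ²) random variables and a₁,…,aₙ real constants. Define X = ∑ᵢ wᵢ 1_{wᵢ > aᵢ} − (σ/√(2π)) ∑ᵢ e^{−aᵢ²/(2σ²)}. Then E[e^{λX}] ≤ e^{nλ²σ²/2} for all λ > 0. -/
/-!
Since `e^y - y ≥ 1`, pointwise `e^{λ x 1_{x>a}} ≤ e^{λx} - λx + λ x 1_{x>a}`. For `x ~ N(0, σ²)` the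
right side integrates to `e^{λ²σ²/2} + λ m` with `m = E[x 1_{x>a}] = σ² φ(a)`, obtained from
`x φ(x) = -σ² φ'(x)`; and `(M + t) e^{-t} ≤ M` for `M ≥ 1`, `t ≥ 0` absorbs the centring by `m`.
By independence the moment generating function of the sum is the product of these bounds.
-/

open MeasureTheory ProbabilityTheory Real Set Filter Topology
open scoped NNReal

lemma exp_mul_mul_indicator_le (s : Set ℝ) (l x z : ℝ) :
    rexp (l * (x * s.indicator (fun _ => (1 : ℝ)) z))
      ≤ rexp (l * x) - l * x + l * (x * s.indicator (fun _ => (1 : ℝ)) z) := by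
  by_cases hz : z ∈ s
  · simp [hz]
  · simp only [hz, not_false_eq_true, indicator_of_notMem, mul_zero, exp_zero, add_zero]
    linarith [add_one_le_exp (l * x)]

lemma add_mul_exp_neg_le {M t : ℝ} (hM : 1 ≤ M) (ht : 0 ≤ t) : (M + t) * rexp (-t) ≤ M := by
  rw [exp_neg, mul_inv_le_iff₀ (exp_pos t)]
  nlinarith [add_one_le_exp t]

namespace ProbabilityTheory

lemma hasDerivAt_gaussianPDFReal (μ : ℝ) (v : ℝ≥0) (x : ℝ) :
    HasDerivAt (gaussianPDFReal μ v) (-((x - μ) / v) * gaussianPDFReal μ v x) x := by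
  have h : HasDerivAt (fun y => -(y - μ) ^ 2 / (2 * v)) (-(2 * (x - μ)) / (2 * v)) x := by
    simpa using (((hasDerivAt_id x).sub_const μ).pow 2).neg.div_const (2 * (v : ℝ))
  rw [gaussianPDFReal_def]
  exact (h.exp.const_mul _).congr_deriv (by ring)

lemma tendsto_gaussianPDFReal_atTop (μ : ℝ) (v : ℝ≥0) :
    Tendsto (gaussianPDFReal μ v) atTop (𝓝 0) := by
  rcases eq_or_ne v 0 with rfl | hv
  · rw [gaussianPDFReal_zero_var]; exact tendsto_const_nhds (x := (0 : ℝ))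
  have hsq : Tendsto (fun x => (x - μ) ^ 2 / (2 * v)) atTop atTop :=
    ((tendsto_pow_atTop two_ne_zero).comp (tendsto_atTop_add_const_right _ (-μ) tendsto_id))
      |>.atTop_div_const (by positivity)
  have := (tendsto_exp_neg_atTop_nhds_zero.comp hsq).const_mul (√(2 * π * v))⁻¹
  rw [mul_zero] at this
  rw [gaussianPDFReal_def]
  simpa only [Function.comp_def, neg_div, id] using this

lemma integrable_sub_mul_gaussianPDFReal (μ : ℝ) (v : ℝ≥0) :
    Integrable (fun x => (x - μ) * gaussianPDFReal μ v x) := by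
  rcases eq_or_ne v 0 with rfl | hv
  · simp
  have h : Integrable (fun x => x - μ) (gaussianReal μ v) :=
    ((memLp_id_gaussianReal 1).integrable le_rfl).sub (integrable_const μ)
  rw [gaussianReal_of_var_ne_zero _ hv, integrable_withDensity_iff_integrable_smul'
    (measurable_gaussianPDF μ v) (ae_of_all _ fun _ => gaussianPDF_lt_top)] at h
  simpa [toReal_gaussianPDF, mul_comm] using h

lemma integral_Ioi_sub_mul_gaussianPDFReal (μ : ℝ) (v : ℝ≥0) (a : ℝ) :
    ∫ x in Ioi a, (x - μ) * gaussianPDFReal μ v x = v * gaussianPDFReal μ v a := by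
  rcases eq_or_ne v 0 with rfl | hv
  · simp
  have hderiv : ∀ x ∈ Ici a, HasDerivAt (fun y => -(v : ℝ) * gaussianPDFReal μ v y)
      ((x - μ) * gaussianPDFReal μ v x) x := fun x _ =>
    ((hasDerivAt_gaussianPDFReal μ v x).const_mul _).congr_deriv (by field_simp)
  have hlim := (tendsto_gaussianPDFReal_atTop μ v).const_mul (-(v : ℝ))
  rw [mul_zero] at hlim
  rw [integral_Ioi_of_hasDerivAt_of_tendsto' hderiv
    (integrable_sub_mul_gaussianPDFReal μ v).integrableOn hlim]
  ring

lemma integral_sub_mul_indicator_Ioi_gaussianReal (μ : ℝ) (v : ℝ≥0) (a : ℝ) :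
    ∫ x, (x - μ) * (Ioi a).indicator (fun _ => (1 : ℝ)) x ∂gaussianReal μ v
      = v * gaussianPDFReal μ v a := by
  rcases eq_or_ne v 0 with rfl | hv
  · simp
  have hind : ∀ x, gaussianPDFReal μ v x • ((x - μ) * (Ioi a).indicator (fun _ => (1 : ℝ)) x)
      = (Ioi a).indicator (fun x => (x - μ) * gaussianPDFReal μ v x) x := fun x => by
    by_cases hx : x ∈ Ioi a <;> simp [hx, mul_comm]
  simp_rw [integral_gaussianReal_eq_integral_smul hv, hind,
    integral_indicator measurableSet_Ioi, integral_Ioi_sub_mul_gaussianPDFReal]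

lemma mgf_sub_gaussianReal (μ : ℝ) (v : ℝ≥0) (t : ℝ) :
    mgf (fun x => x - μ) (gaussianReal μ v) t = rexp (v * t ^ 2 / 2) := by
  rw [mgf_gaussianReal (gaussianReal_map_sub_const μ), sub_self, zero_mul, zero_add]

lemma mgf_sub_mul_indicator_Ioi_sub_le (μ : ℝ) (v : ℝ≥0) (a : ℝ) {l : ℝ} (hl : 0 ≤ l) :
    mgf (fun x => (x - μ) * (Ioi a).indicator (fun _ => (1 : ℝ)) x - v * gaussianPDFReal μ v a)
      (gaussianReal μ v) l ≤ rexp (v * l ^ 2 / 2) := by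
  set Y : ℝ → ℝ := fun x => (x - μ) * (Ioi a).indicator (fun _ => (1 : ℝ)) x
  set m := (v : ℝ) * gaussianPDFReal μ v a
  have hm : 0 ≤ l * m := mul_nonneg hl (mul_nonneg v.2 (gaussianPDFReal_nonneg μ v a))
  have hexp : Integrable (fun x => rexp (l * (x - μ))) (gaussianReal μ v) := by
    rw [← mgf_pos_iff, mgf_sub_gaussianReal]
    exact exp_pos _
  have hid : Integrable (fun x => x) (gaussianReal μ v) :=
    (memLp_id_gaussianReal 1).integrable le_rfl
  have hcenter : Integrable (fun x => x - μ) (gaussianReal μ v) := hid.sub (integrable_const μ)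
  have hY : Integrable Y (gaussianReal μ v) :=
    (hcenter.indicator (measurableSet_Ioi (a := a))).congr
      (ae_of_all _ fun x => by by_cases hx : x ∈ Ioi a <;> simp [Y, hx])
  have hcenter_mean : ∫ x, (x - μ) ∂gaussianReal μ v = 0 := by
    rw [integral_sub hid (integrable_const μ)]
    simp
  have hmgfY : mgf Y (gaussianReal μ v) l ≤ rexp (v * l ^ 2 / 2) + l * m := calc
    mgf Y (gaussianReal μ v) l
      ≤ ∫ x, (rexp (l * (x - μ)) - l * (x - μ) + l * Y x) ∂gaussianReal μ v :=
        integral_mono_of_nonneg (ae_of_all _ fun _ => (exp_pos _).le)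
          ((hexp.sub (hcenter.const_mul l)).add (hY.const_mul l))
          (ae_of_all _ fun x => exp_mul_mul_indicator_le _ _ _ _)
    _ = rexp (v * l ^ 2 / 2) + l * m := by
        rw [integral_add (f := fun x => rexp (l * (x - μ)) - l * (x - μ))
            (hexp.sub (hcenter.const_mul l)) (hY.const_mul l),
          integral_sub hexp (hcenter.const_mul l), integral_const_mul, integral_const_mul,
          hcenter_mean, integral_sub_mul_indicator_Ioi_gaussianReal, ← mgf_sub_gaussianReal μ v l]
        simp [mgf, m]
  calc mgf (fun x => Y x - m) (gaussianReal μ v) l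
      = mgf Y (gaussianReal μ v) l * rexp (-(l * m)) := by
        simp_rw [sub_eq_add_neg, mgf_add_const, mul_neg]
    _ ≤ (rexp (v * l ^ 2 / 2) + l * m) * rexp (-(l * m)) :=
        mul_le_mul_of_nonneg_right hmgfY (exp_pos _).le
    _ ≤ rexp (v * l ^ 2 / 2) := add_mul_exp_neg_le (one_le_exp (by positivity)) hm

lemma toNNReal_sq_mul_gaussianPDFReal {σ : ℝ} (hσ : 0 ≤ σ) (a : ℝ) :
    ((σ ^ 2).toNNReal : ℝ) * gaussianPDFReal 0 (σ ^ 2).toNNReal a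
      = σ / √(2 * π) * rexp (-a ^ 2 / (2 * σ ^ 2)) := by
  rcases hσ.eq_or_lt with rfl | hσ
  · simp
  rw [gaussianPDFReal, Real.coe_toNNReal _ (sq_nonneg σ), sub_zero,
    sqrt_mul (by positivity), sqrt_sq hσ.le]
  field_simp

end ProbabilityTheory

theorem stmt_7 {Ω : Type*} [MeasureSpace Ω] [IsProbabilityMeasure (ℙ : Measure Ω)]
    (n : ℕ) (σ : ℝ) (hσ : 0 < σ) (w : Fin n → Ω → ℝ) (a : Fin n → ℝ)
    (hindep : iIndepFun w ℙ)
    (hdist : ∀ i, Measure.map (w i) ℙ = gaussianReal 0 (Real.toNNReal (σ ^ 2)))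
    (l : ℝ) (hl : 0 < l) :
    ∫ ω, Real.exp (l * ((∑ i, w i ω * Set.indicator (Set.Ioi (a i)) (fun _ => (1 : ℝ)) (w i ω)) -
        (σ / Real.sqrt (2 * Real.pi)) * ∑ i, Real.exp (-(a i) ^ 2 / (2 * σ ^ 2))))
      ≤ Real.exp ((n : ℝ) * l ^ 2 * σ ^ 2 / 2) := by
  set g : Fin n → ℝ → ℝ := fun i x => x * (Ioi (a i)).indicator (fun _ => (1 : ℝ)) x
    - σ / √(2 * π) * rexp (-a i ^ 2 / (2 * σ ^ 2))
  have hg : ∀ i, Measurable (g i) := fun i =>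
    (measurable_id.mul (measurable_const.indicator measurableSet_Ioi)).sub measurable_const
  have hw : ∀ i, AEMeasurable (w i) ℙ := fun i =>
    aemeasurable_of_map_neZero (by rw [hdist i]; infer_instance)
  have hmgf : ∀ i, mgf (g i ∘ w i) ℙ l ≤ rexp (l ^ 2 * σ ^ 2 / 2) := fun i => by
    rw [← mgf_map (hw i) ((measurable_const.mul (hg i)).exp.aestronglyMeasurable), hdist i]
    have h := mgf_sub_mul_indicator_Ioi_sub_le 0 (σ ^ 2).toNNReal (a i) hl.le
    rw [toNNReal_sq_mul_gaussianPDFReal hσ.le, Real.coe_toNNReal _ (sq_nonneg σ)] at h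
    simp only [sub_zero] at h
    convert h using 2
    ring
  calc _ = mgf (∑ i, g i ∘ w i) ℙ l := by
        simp [mgf, g, Finset.sum_sub_distrib, Finset.mul_sum]
    _ = ∏ i, mgf (g i ∘ w i) ℙ l :=
        (hindep.comp g hg).mgf_sum₀ (fun i => (hg i).comp_aemeasurable (hw i)) _
    _ ≤ ∏ _i : Fin n, rexp (l ^ 2 * σ ^ 2 / 2) :=
        Finset.prod_le_prod (fun _ _ => mgf_nonneg) fun i _ => hmgf i
    _ = _ := by
        rw [Finset.prod_const, Finset.card_univ, Fintype.card_fin, ← exp_nat_mul]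
        ring_nf
end
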